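/- Let σ : ℝ^d → ℝ be L-Lipschitz and differentiable almost everywhere, and let Z be uniformly distributed on the cube [−c/2, c/2]^d with c > 0. Then σ̄(x) := E[σ(x + Z)] is differentiable with ∇σ̄(x) = E[∇σ(x + Z)], and ∇σ̄ is Lipschitz continuous with constant 2√d·L/c. -/

import Mathlib

/-!
A Lipschitz `σ` is differentiable almost everywhere (Rademacher) with `‖∇σ‖ ≤ L`, so dominated
convergence lets us differentiate `x ↦ ∫ σ (x + z) dμ` under the integral sign. After a
translation, `∇σ̄ x` is `c⁻ᵈ` times the integral of `∇σ` over the cube of side `c` centred at `x`.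
Two such integrals differ only by integrals over the two differences of the cubes, each of volume
at most `cᵈ⁻¹ ∑ |xᵢ - yᵢ| ≤ cᵈ⁻¹ √d ‖x - y‖`, whence the constant `2 √d L / c`.
-/

open MeasureTheory Set Filter InnerProductSpace
open scoped NNReal ENNReal Gradient

section TranslateIntegral

variable {E : Type*} [NormedAddCommGroup E] [NormedSpace ℝ E] [FiniteDimensional ℝ E]
  [MeasurableSpace E] [BorelSpace E] {μ ν : Measure E} [ν.IsAddHaarMeasure] {K : ℝ≥0}

theorem hasFDerivAt_integral_comp_add_of_lipschitzWith {F : Type*} [NormedAddCommGroup F]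
    [NormedSpace ℝ F] [FiniteDimensional ℝ F] [IsFiniteMeasure μ] {f : E → F}
    (hf : LipschitzWith K f) (hμ : μ ≪ ν) {x : E} (hint : Integrable (fun z ↦ f (x + z)) μ) :
    HasFDerivAt (fun y ↦ ∫ z, f (y + z) ∂μ) (∫ z, fderiv ℝ f (x + z) ∂μ) x := by
  have hdiff : ∀ᵐ z ∂ν, DifferentiableAt ℝ f (x + z) :=
    (measurePreserving_add_left ν x).quasiMeasurePreserving.ae hf.ae_differentiableAt
  refine (hasFDerivAt_integral_of_dominated_loc_of_lip (F := fun y z ↦ f (y + z))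
    (bound := fun _ ↦ (K : ℝ)) univ_mem
    (.of_forall fun y ↦ (hf.continuous.comp (continuous_const_add y)).aestronglyMeasurable) hint
    ((measurable_fderiv ℝ f).comp (measurable_const_add x)).aestronglyMeasurable
    (.of_forall fun z ↦ ?_) (integrable_const _) ?_).2
  · simpa [Function.comp_def] using
      (hf.comp (isometry_add_right z).lipschitz).lipschitzOnWith (s := univ)
  · filter_upwards [hμ.ae_le hdiff] with z hz
    simpa [Function.comp_def] using hz.hasFDerivAt.comp x ((hasFDerivAt_id x).add_const z)

end TranslateIntegral

section Gradient

variable {E : Type*} [NormedAddCommGroup E] [InnerProductSpace ℝ E] [CompleteSpace E]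
  {K : ℝ≥0} {f : E → ℝ}

theorem norm_gradient_le_of_lipschitzWith (hf : LipschitzWith K f) (x : E) : ‖∇ f x‖ ≤ K := by
  rw [gradient, LinearIsometryEquiv.norm_map]
  exact norm_fderiv_le_of_lipschitz ℝ hf

theorem measurable_gradient [MeasurableSpace E] [BorelSpace E] : Measurable (∇ f) :=
  (InnerProductSpace.toDual ℝ E).symm.continuous.measurable.comp (measurable_fderiv ℝ f)

theorem hasGradientAt_integral_comp_add_of_lipschitzWith [FiniteDimensional ℝ E]
    [MeasurableSpace E] [BorelSpace E] {μ ν : Measure E} [ν.IsAddHaarMeasure] [IsFiniteMeasure μ]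
    (hf : LipschitzWith K f) (hμ : μ ≪ ν) {x : E} (hint : Integrable (fun z ↦ f (x + z)) μ) :
    HasGradientAt (fun y ↦ ∫ z, f (y + z) ∂μ) (∫ z, ∇ f (x + z) ∂μ) x := by
  have hcomm : toDual ℝ E (∫ z, ∇ f (x + z) ∂μ) = ∫ z, fderiv ℝ f (x + z) ∂μ := calc
    _ = ∫ z, toDual ℝ E (∇ f (x + z)) ∂μ :=
      ((toDual ℝ E).toContinuousLinearEquiv.integral_comp_comm _).symm
    _ = ∫ z, fderiv ℝ f (x + z) ∂μ := by simp only [toDual_gradient]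
  rw [hasGradientAt_iff_hasFDerivAt, hcomm]
  exact hasFDerivAt_integral_comp_add_of_lipschitzWith hf hμ hint

end Gradient

theorem norm_setIntegral_sub_setIntegral_le {α F : Type*} [MeasurableSpace α] {μ : Measure α}
    [NormedAddCommGroup F] [NormedSpace ℝ F] {s t : Set α} {g : α → F} {M : ℝ}
    (hs : MeasurableSet s) (ht : MeasurableSet t) (hμs : μ s ≠ ∞) (hμt : μ t ≠ ∞)
    (hg : AEStronglyMeasurable g μ) (hgM : ∀ x, ‖g x‖ ≤ M) :
    ‖∫ x in s, g x ∂μ - ∫ x in t, g x ∂μ‖ ≤ M * (μ.real (s \ t) + μ.real (t \ s)) := by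
  have hgs : IntegrableOn g s μ := Measure.integrableOn_of_bounded hμs hg (.of_forall hgM)
  have hgt : IntegrableOn g t μ := Measure.integrableOn_of_bounded hμt hg (.of_forall hgM)
  rw [← integral_inter_add_sdiff ht hgs, ← integral_inter_add_sdiff hs hgt, inter_comm,
    add_sub_add_left_eq_sub, mul_add]
  have hst : μ (s \ t) < ∞ := (measure_mono sdiff_subset).trans_lt hμs.lt_top
  have hts : μ (t \ s) < ∞ := (measure_mono sdiff_subset).trans_lt hμt.lt_top
  exact (norm_sub_le _ _).trans <| add_le_add
    (norm_setIntegral_le_of_norm_le_const hst fun x _ ↦ hgM x)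
    (norm_setIntegral_le_of_norm_le_const hts fun x _ ↦ hgM x)

section Cube

variable {ι : Type*}

theorem volume_setOf_forall_mem [Fintype ι] (A : ι → Set ℝ) :
    volume {z : EuclideanSpace ℝ ι | ∀ i, z i ∈ A i} = ∏ i, volume (A i) := by
  rw [← volume_pi_pi,
    ← (EuclideanSpace.volume_preserving_symm_measurableEquiv_toLp ι).measure_preimage_equiv]
  congr 1
  ext z
  simp

theorem sum_abs_le_sqrt_card_mul_norm [Fintype ι] (x : EuclideanSpace ℝ ι) :
    ∑ i, |x i| ≤ √(Fintype.card ι) * ‖x‖ := by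
  rw [EuclideanSpace.norm_eq, ← Real.sqrt_mul (Nat.cast_nonneg _)]
  apply Real.le_sqrt_of_sq_le
  simpa [sq_abs] using sq_sum_le_card_mul_sum_sq (s := Finset.univ) (f := fun i ↦ |x i|)

def cube (c : ℝ) (x : EuclideanSpace ℝ ι) : Set (EuclideanSpace ℝ ι) :=
  {w | ∀ i, w i ∈ Icc (x i - c / 2) (x i + c / 2)}

theorem cube_eq_preimage (c : ℝ) (x : EuclideanSpace ℝ ι) :
    cube c x = WithLp.ofLp ⁻¹' univ.pi fun i ↦ Icc (x i - c / 2) (x i + c / 2) := by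
  ext; simp only [cube, mem_ofPred_eq, mem_preimage, mem_univ_pi]

theorem isCompact_cube [Fintype ι] (c : ℝ) (x : EuclideanSpace ℝ ι) : IsCompact (cube c x) := by
  rw [cube_eq_preimage]
  exact (PiLp.homeomorph ..).isCompact_preimage.2 (isCompact_univ_pi fun _ ↦ isCompact_Icc)

theorem measurableSet_cube [Fintype ι] (c : ℝ) (x : EuclideanSpace ℝ ι) :
    MeasurableSet (cube c x) :=
  (isCompact_cube c x).isClosed.measurableSet

theorem volume_cube [Fintype ι] (c : ℝ) (x : EuclideanSpace ℝ ι) :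
    volume (cube c x) = ENNReal.ofReal c ^ Fintype.card ι := by
  simp only [cube, volume_setOf_forall_mem, Real.volume_Icc, add_sub_sub_cancel, add_halves,
    Finset.prod_const, Finset.card_univ]

theorem preimage_add_cube (c : ℝ) (x : EuclideanSpace ℝ ι) :
    (x + ·) ⁻¹' cube c x = cube c 0 := by
  ext z
  refine forall_congr' fun i ↦ ?_
  simp only [mem_Icc, PiLp.add_apply, PiLp.zero_apply, zero_sub, zero_add]
  constructor <;> rintro ⟨h₁, h₂⟩ <;> constructor <;> linarith

theorem volume_Icc_sdiff_Icc_le (a b r : ℝ) :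
    volume (Icc (a - r) (a + r) \ Icc (b - r) (b + r)) ≤ ENNReal.ofReal |a - b| := by
  rcases le_total a b with h | h
  · calc _ ≤ volume (Ico (a - r) (b - r)) := measure_mono <| by
          rintro t ⟨⟨h₁, h₂⟩, h₃⟩
          exact ⟨h₁, not_le.1 fun h₄ ↦ h₃ ⟨h₄, by linarith⟩⟩
      _ = ENNReal.ofReal |a - b| := by
        rw [Real.volume_Ico, abs_sub_comm, abs_of_nonneg (by linarith)]; ring_nf
  · calc _ ≤ volume (Ioc (b + r) (a + r)) := measure_mono <| by
          rintro t ⟨⟨h₁, h₂⟩, h₃⟩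
          exact ⟨not_le.1 fun h₄ ↦ h₃ ⟨by linarith, h₄⟩, h₂⟩
      _ = ENNReal.ofReal |a - b| := by
        rw [Real.volume_Ioc, abs_of_nonneg (by linarith)]; ring_nf

-- Multiplied through by `c`, so that no truncated `c ^ (Fintype.card ι - 1)` appears.
theorem measureReal_cube_sdiff_cube_le [Fintype ι] {c : ℝ} (hc : 0 ≤ c)
    (x y : EuclideanSpace ℝ ι) :
    c * volume.real (cube c x \ cube c y) ≤ (∑ i, |x i - y i|) * c ^ Fintype.card ι := by
  classical
  set I : EuclideanSpace ℝ ι → ι → Set ℝ := fun v i ↦ Icc (v i - c / 2) (v i + c / 2)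
  set slab : ι → Set (EuclideanSpace ℝ ι) :=
    fun i ↦ {w | ∀ j, w j ∈ Function.update (I x) i (I x i \ I y i) j}
  have hcover : cube c x \ cube c y ⊆ ⋃ i, slab i := by
    rintro w ⟨hx, hy⟩
    obtain ⟨i, hi⟩ := not_forall.1 hy
    refine mem_iUnion.2 ⟨i, fun j ↦ ?_⟩
    rcases eq_or_ne j i with rfl | hj
    · rw [Function.update_self]
      exact ⟨hx j, hi⟩
    · rw [Function.update_of_ne hj]
      exact hx j
  have hslab (i : ι) : ENNReal.ofReal c * volume (slab i) ≤
      ENNReal.ofReal |x i - y i| * ENNReal.ofReal c ^ Fintype.card ι := by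
    have hI (j : ι) : volume (I x j) = ENNReal.ofReal c := by
      simp only [I, Real.volume_Icc, add_sub_sub_cancel, add_halves]
    rw [volume_setOf_forall_mem, Finset.prod_eq_mul_prod_sdiff_singleton_of_mem (Finset.mem_univ i),
      Function.update_self, Finset.prod_congr rfl fun j hj ↦ by
        rw [Function.update_of_ne (by simpa using hj), hI], mul_left_comm,
      ← Finset.prod_eq_mul_prod_sdiff_singleton_of_mem (f := fun _ ↦ ENNReal.ofReal c)
        (Finset.mem_univ i), Finset.prod_const, Finset.card_univ]
    gcongr
    exact volume_Icc_sdiff_Icc_le _ _ _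
  have hsum : ENNReal.ofReal c * volume (cube c x \ cube c y) ≤
      ENNReal.ofReal (∑ i, |x i - y i|) * ENNReal.ofReal c ^ Fintype.card ι := calc
    _ ≤ ENNReal.ofReal c * ∑ i, volume (slab i) :=
      by gcongr; exact (measure_mono hcover).trans (measure_iUnion_fintype_le _ _)
    _ ≤ ∑ i, ENNReal.ofReal |x i - y i| * ENNReal.ofReal c ^ Fintype.card ι := by
      rw [Finset.mul_sum]; exact Finset.sum_le_sum fun i _ ↦ hslab i
    _ = _ := by
      rw [← Finset.sum_mul, ENNReal.ofReal_sum_of_nonneg fun i _ ↦ abs_nonneg _]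
  have := ENNReal.toReal_mono (by finiteness) hsum
  rwa [ENNReal.toReal_mul, ENNReal.toReal_mul, ENNReal.toReal_pow, ENNReal.toReal_ofReal hc,
    ENNReal.toReal_ofReal (by positivity)] at this

end Cube

section UniformCube

variable {ι : Type*} [Fintype ι]

noncomputable def uniformCube (c : ℝ) : Measure (EuclideanSpace ℝ ι) :=
  (ENNReal.ofReal (c ^ Fintype.card ι))⁻¹ • volume.restrict (cube c 0)

theorem isProbabilityMeasure_uniformCube {c : ℝ} (hc : 0 < c) :
    IsProbabilityMeasure (uniformCube (ι := ι) c) := by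
  constructor
  rw [uniformCube, Measure.smul_apply, Measure.restrict_apply_univ, volume_cube,
    ← ENNReal.ofReal_pow hc.le, smul_eq_mul,
    ENNReal.inv_mul_cancel (ENNReal.ofReal_pos.2 (pow_pos hc _)).ne' ENNReal.ofReal_ne_top]

theorem uniformCube_absolutelyContinuous (c : ℝ) : uniformCube (ι := ι) c ≪ volume :=
  (Measure.absolutelyContinuous_of_le Measure.restrict_le_self).smul_left _

theorem integral_comp_add_uniformCube {F : Type*} [NormedAddCommGroup F] [NormedSpace ℝ F]
    {c : ℝ} (hc : 0 ≤ c) (g : EuclideanSpace ℝ ι → F) (x : EuclideanSpace ℝ ι) :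
    ∫ z, g (x + z) ∂uniformCube c = (c ^ Fintype.card ι)⁻¹ • ∫ w in cube c x, g w := by
  rw [uniformCube, integral_smul_measure, ENNReal.toReal_inv, ENNReal.toReal_ofReal (by positivity),
    ← preimage_add_cube c x, (measurePreserving_add_left volume x).setIntegral_preimage_emb
      (MeasurableEquiv.addLeft x).measurableEmbedding]

theorem integrable_comp_add_uniformCube {F : Type*} [NormedAddCommGroup F] {c : ℝ} (hc : 0 < c)
    {g : EuclideanSpace ℝ ι → F} (hg : Continuous g) (x : EuclideanSpace ℝ ι) :
    Integrable (fun z ↦ g (x + z)) (uniformCube c) :=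
  ((hg.comp (continuous_const_add x)).continuousOn.integrableOn_compact
    (isCompact_cube c 0)).smul_measure
    (ENNReal.inv_ne_top.2 (ENNReal.ofReal_pos.2 (pow_pos hc _)).ne')

theorem lipschitzWith_integral_comp_add_uniformCube {F : Type*} [NormedAddCommGroup F]
    [NormedSpace ℝ F] {c M : ℝ} (hc : 0 < c) {g : EuclideanSpace ℝ ι → F}
    (hg : AEStronglyMeasurable g) (hgM : ∀ w, ‖g w‖ ≤ M) :
    LipschitzWith (Real.toNNReal (2 * √(Fintype.card ι) * M / c))
      fun x ↦ ∫ z, g (x + z) ∂uniformCube c := by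
  have hM : 0 ≤ M := (norm_nonneg _).trans (hgM 0)
  refine LipschitzWith.of_dist_le_mul fun x y ↦ ?_
  set n := Fintype.card ι
  set S := ∑ i, |x i - y i|
  have hS : S ≤ √n * ‖x - y‖ := by simpa using sum_abs_le_sqrt_card_mul_norm (x - y)
  have hxy : volume.real (cube c x \ cube c y) ≤ S * c ^ n / c := by
    rw [le_div_iff₀' hc]; exact measureReal_cube_sdiff_cube_le hc.le x y
  have hyx : volume.real (cube c y \ cube c x) ≤ S * c ^ n / c := by
    rw [le_div_iff₀' hc]
    simpa only [S, abs_sub_comm (y _)] using measureReal_cube_sdiff_cube_le hc.le y x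
  have hcube := norm_setIntegral_sub_setIntegral_le (measurableSet_cube c x)
    (measurableSet_cube c y) (by simp [volume_cube]) (by simp [volume_cube]) hg hgM
  rw [Real.coe_toNNReal _ (by positivity), dist_eq_norm, dist_eq_norm,
    integral_comp_add_uniformCube hc.le, integral_comp_add_uniformCube hc.le, ← smul_sub,
    norm_smul, Real.norm_of_nonneg (by positivity)]
  calc _ ≤ (c ^ n)⁻¹ * (M * (S * c ^ n / c + S * c ^ n / c)) := by
        gcongr; exact hcube.trans (by gcongr)
    _ = 2 * M * S / c := by field_simp; ring
    _ ≤ 2 * M * (√n * ‖x - y‖) / c := by gcongr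
    _ = 2 * √n * M / c * ‖x - y‖ := by ring

end UniformCube

theorem stmt6_general {d : ℕ} (σ : EuclideanSpace ℝ (Fin d) → ℝ) (L c : ℝ)
    (hL : 0 ≤ L) (hc : 0 < c)
    (hlip : LipschitzWith (Real.toNNReal L) σ)
    (μZ : Measure (EuclideanSpace ℝ (Fin d)))
    (hμZ : μZ = (ENNReal.ofReal (c ^ d))⁻¹ •
      (volume.restrict {z : EuclideanSpace ℝ (Fin d) | ∀ i, z i ∈ Set.Icc (-(c / 2)) (c / 2)}))
    (sbar : EuclideanSpace ℝ (Fin d) → ℝ)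
    (hsbar : ∀ x, sbar x = ∫ z, σ (x + z) ∂μZ) :
    (∀ x, HasGradientAt sbar (∫ z, gradient σ (x + z) ∂μZ) x) ∧
      LipschitzWith (Real.toNNReal (2 * Real.sqrt d * L / c)) (fun x => gradient sbar x) := by
  obtain rfl : μZ = uniformCube c := by
    rw [hμZ, uniformCube, Fintype.card_fin, cube]
    simp_rw [PiLp.zero_apply, zero_sub, zero_add]
  obtain rfl : sbar = fun x ↦ ∫ z, σ (x + z) ∂uniformCube c := funext hsbar
  have := isProbabilityMeasure_uniformCube (ι := Fin d) hc
  have hgrad (x : EuclideanSpace ℝ (Fin d)) := hasGradientAt_integral_comp_add_of_lipschitzWith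
    hlip (uniformCube_absolutelyContinuous c) (integrable_comp_add_uniformCube hc hlip.continuous x)
  refine ⟨hgrad, ?_⟩
  have hbound (w : EuclideanSpace ℝ (Fin d)) : ‖∇ σ w‖ ≤ L := by
    simpa [Real.coe_toNNReal _ hL] using norm_gradient_le_of_lipschitzWith hlip w
  rw [gradient_eq hgrad]
  simpa using lipschitzWith_integral_comp_add_uniformCube hc
    measurable_gradient.aestronglyMeasurable hbound

theorem stmt6 {d : ℕ} (hd : 1 ≤ d) (σ : EuclideanSpace ℝ (Fin d) → ℝ) (L c : ℝ)
    (hL : 0 ≤ L) (hc : 0 < c)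
    (hlip : LipschitzWith (Real.toNNReal L) σ)
    (hdiff : ∀ᵐ z ∂(volume : Measure (EuclideanSpace ℝ (Fin d))), DifferentiableAt ℝ σ z)
    (μZ : Measure (EuclideanSpace ℝ (Fin d)))
    (hμZ : μZ = (ENNReal.ofReal (c ^ d))⁻¹ •
      (volume.restrict {z : EuclideanSpace ℝ (Fin d) | ∀ i, z i ∈ Set.Icc (-(c / 2)) (c / 2)}))
    (sbar : EuclideanSpace ℝ (Fin d) → ℝ)
    (hsbar : ∀ x, sbar x = ∫ z, σ (x + z) ∂μZ) :
    (∀ x, HasGradientAt sbar (∫ z, gradient σ (x + z) ∂μZ) x) ∧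
      LipschitzWith (Real.toNNReal (2 * Real.sqrt d * L / c)) (fun x => gradient sbar x) :=
  stmt6_general σ L c hL hc hlip μZ hμZ sbar hsbar
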